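/- (Hennessy–Milner Theorem for finite models.) For all finite pointed Kripke models (M,a) and (M',a') and every finite set P of propositional variables, (M,a) ≡_P (M',a') if and only if (M,a) ∼_P (M',a'). -/

import Mathlib

/-- Modal formulas in negation normal form, as in the paper:
φ ::= ⊥ | ⊤ | p | ¬p | φ∧φ | φ∨φ | □φ | ◇φ. -/
inductive Form : Type where
  | bot : Form
  | top : Form
  | pos : ℕ → Form
  | npos : ℕ → Form
  | and : Form → Form → Form
  | or : Form → Form → Form
  | box : Form → Form
  | dia : Form → Form
deriving DecidableEq

namespace Form

/-- Negation, defined as usual (by De Morgan dualities). -/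
def neg : Form → Form
  | bot => top
  | top => bot
  | pos p => npos p
  | npos p => pos p
  | and φ ψ => or φ.neg ψ.neg
  | or φ ψ => and φ.neg ψ.neg
  | box φ => dia φ.neg
  | dia φ => box φ.neg

/-- Implication φ → ψ, defined as usual. -/
def imp (φ ψ : Form) : Form := or φ.neg ψ

/-- Bi-implication φ ↔ ψ, defined as usual. -/
def biimp (φ ψ : Form) : Form := and (imp φ ψ) (imp ψ φ)

/-- P(φ): the set of propositional variables occurring in φ. -/
def vars : Form → Finset ℕ
  | bot => ∅
  | top => ∅
  | pos p => {p}
  | npos p => {p}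
  | and φ ψ => φ.vars ∪ ψ.vars
  | or φ ψ => φ.vars ∪ ψ.vars
  | box φ => φ.vars
  | dia φ => φ.vars

/-- Modal depth. -/
def md : Form → ℕ
  | bot => 0
  | top => 0
  | pos _ => 0
  | npos _ => 0
  | and φ ψ => max φ.md ψ.md
  | or φ ψ => max φ.md ψ.md
  | box φ => φ.md + 1
  | dia φ => φ.md + 1

/-- sub(φ): the set of subformulas of φ. -/
def subf : Form → Finset Form
  | bot => {bot}
  | top => {top}
  | pos p => {pos p}
  | npos p => {npos p}
  | and φ ψ => insert (and φ ψ) (φ.subf ∪ ψ.subf)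
  | or φ ψ => insert (or φ ψ) (φ.subf ∪ ψ.subf)
  | box φ => insert (box φ) φ.subf
  | dia φ => insert (dia φ) φ.subf

/-- s̄ub(φ) = sub(φ) ∪ {¬ψ : ψ ∈ sub(φ)}. -/
def subBar (φ : Form) : Finset Form := φ.subf ∪ φ.subf.image neg

/-- □^k φ : k nested boxes. -/
def boxIter : ℕ → Form → Form
  | 0, φ => φ
  | n + 1, φ => box (boxIter n φ)

def isDia : Form → Bool
  | dia _ => true
  | _ => false

def isBox : Form → Bool
  | box _ => true
  | _ => false

end Form

/-- Big conjunction over a finite set of formulas (⋀∅ = ⊤). -/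
noncomputable def bigAnd (s : Finset Form) : Form := s.toList.foldr Form.and Form.top

/-- Big disjunction over a finite set of formulas (⋁∅ = ⊥). -/
noncomputable def bigOr (s : Finset Form) : Form := s.toList.foldr Form.or Form.bot

/-- th(a) = ⋀ a. -/
noncomputable def th (a : Finset Form) : Form := bigAnd a

/-- A finite Kripke model: a nonempty finite set of states, an accessibility
relation and a valuation. -/
structure Model : Type 1 where
  W : Type
  nonempty : Nonempty W
  finite : Finite W
  R : W → W → Prop
  V : W → Set ℕ

/-- Satisfaction M,w ⊨ φ. -/
def Model.sat (M : Model) : M.W → Form → Prop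
  | _, .bot => False
  | _, .top => True
  | w, .pos p => p ∈ M.V w
  | w, .npos p => p ∉ M.V w
  | w, .and φ ψ => M.sat w φ ∧ M.sat w ψ
  | w, .or φ ψ => M.sat w φ ∨ M.sat w ψ
  | w, .box φ => ∀ v, M.R w v → M.sat v φ
  | w, .dia φ => ∃ v, M.R w v ∧ M.sat v φ

/-- The six base logics K, D, T, K4, KD4, S4. -/
inductive BaseLogic : Type where
  | K | D | T | K4 | KD4 | S4
deriving DecidableEq

/-- A logic: a base logic, possibly extended by axiom 5. -/
structure Logic : Type where
  base : BaseLogic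
  has5 : Bool
deriving DecidableEq

def Logic.K : Logic := ⟨.K, false⟩
def Logic.D : Logic := ⟨.D, false⟩
def Logic.T : Logic := ⟨.T, false⟩
def Logic.K4 : Logic := ⟨.K4, false⟩
def Logic.KD4 : Logic := ⟨.KD4, false⟩
def Logic.S4 : Logic := ⟨.S4, false⟩

/-- l + 5. -/
def BaseLogic.plus5 (b : BaseLogic) : Logic := ⟨b, true⟩

/-- M is a model for the logic l (frame conditions). -/
def Model.IsFor (M : Model) (l : Logic) : Prop :=
  (match l.base with
    | .K => True
    | .D => ∀ w, ∃ v, M.R w v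
    | .T => ∀ w, M.R w w
    | .K4 => ∀ a b c, M.R a b → M.R b c → M.R a c
    | .KD4 => (∀ w, ∃ v, M.R w v) ∧ (∀ a b c, M.R a b → M.R b c → M.R a c)
    | .S4 => (∀ w, M.R w w) ∧ (∀ a b c, M.R a b → M.R b c → M.R a c))
  ∧ (l.has5 = true → ∀ a b c, M.R a b → M.R a c → M.R b c)

/-- φ is satisfiable for l: satisfied at some state of some finite model for l. -/
def Satisfiable (l : Logic) (φ : Form) : Prop :=
  ∃ M : Model, M.IsFor l ∧ ∃ w : M.W, M.sat w φ

/-- φ is valid for l: satisfied at every state of every finite model for l. -/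
def Valid (l : Logic) (φ : Form) : Prop :=
  ∀ M : Model, M.IsFor l → ∀ w : M.W, M.sat w φ

/-- φ is complete for l: for every ψ ∈ L(P(φ)), φ→ψ or φ→¬ψ is valid for l. -/
def Complete (l : Logic) (φ : Form) : Prop :=
  ∀ ψ : Form, ψ.vars ⊆ φ.vars → (Valid l (φ.imp ψ) ∨ Valid l (φ.imp ψ.neg))

/-- Z is a bisimulation modulo P from M to M'. -/
def IsBisim (P : Set ℕ) (M M' : Model) (Z : M.W → M'.W → Prop) : Prop :=
  (∃ s s', Z s s') ∧
  ∀ s s', Z s s' →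
    (M.V s ∩ P = M'.V s' ∩ P) ∧
    (∀ t, M.R s t → ∃ t', M'.R s' t' ∧ Z t t') ∧
    (∀ t', M'.R s' t' → ∃ t, M.R s t ∧ Z t t')

/-- (M,a) ∼_P (M',a'). -/
def Bisimilar (P : Set ℕ) (M : Model) (a : M.W) (M' : Model) (a' : M'.W) : Prop :=
  ∃ Z, IsBisim P M M' Z ∧ Z a a'

/-- (M,a) ≡_P (M',a'): the two pointed models satisfy the same formulas of L(P). -/
def EquivP (P : Set ℕ) (M : Model) (a : M.W) (M' : Model) (a' : M'.W) : Prop :=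
  ∀ φ : Form, ↑φ.vars ⊆ P → (M.sat a φ ↔ M'.sat a' φ)

/-- (M,s) is flat (for base logic l, with axiom 5): the carrier is {s}∪W and
R = R1 ∪ R2 with R1 ⊆ {s}×W, R2 an equivalence relation on W, and s ∈ W if
l ∈ {T,S4}. -/
def Flat (l : BaseLogic) (M : Model) (s : M.W) : Prop :=
  ∃ W : Set M.W, (∀ w, w = s ∨ w ∈ W) ∧
    ∃ R1 R2 : M.W → M.W → Prop,
      (∀ x y, M.R x y ↔ (R1 x y ∨ R2 x y)) ∧
      (∀ x y, R1 x y → x = s ∧ y ∈ W) ∧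
      (∀ x y, R2 x y → x ∈ W ∧ y ∈ W) ∧
      (∀ x ∈ W, R2 x x) ∧
      (∀ x y, R2 x y → R2 y x) ∧
      (∀ x y z, R2 x y → R2 y z → R2 x z) ∧
      ((l = .T ∨ l = .S4) → s ∈ W)

/-- A maximal state for l with respect to φ: a maximally l-consistent subset
of s̄ub(φ). -/
def MaxState (l : Logic) (φ : Form) (a : Finset Form) : Prop :=
  a ⊆ φ.subBar ∧ Satisfiable l (th a) ∧ ∀ ψ ∈ φ.subf, ψ ∈ a ∨ ψ.neg ∈ a

/-- D(x) = {◇ψ : ◇ψ ∈ x}. -/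
def DSet (x : Finset Form) : Finset Form := x.filter (fun ψ => ψ.isDia = true)

/-- B(x) = {□ψ : □ψ ∈ x}. -/
def BSet (x : Finset Form) : Finset Form := x.filter (fun ψ => ψ.isBox = true)

/-- A view: a parent-state and a finite set of children-states. -/
structure View : Type where
  parent : Finset Form
  children : Finset (Finset Form)

/-- The view is with respect to φ: all its states are subsets of s̄ub(φ). -/
def View.WF (φ : Form) (S : View) : Prop :=
  S.parent ⊆ φ.subBar ∧ ∀ c ∈ S.children, c ⊆ φ.subBar

/-- A set of formulas is l-closed. -/
def LClosed (l : Logic) (P : Finset ℕ) (s : Finset Form) : Prop :=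
  (∀ φ1 φ2 : Form, Form.and φ1 φ2 ∈ s → φ1 ∈ s ∧ φ2 ∈ s) ∧
  (∀ φ1 φ2 : Form, Form.or φ1 φ2 ∈ s → φ1 ∈ s ∨ φ2 ∈ s) ∧
  ((l.base = .T ∨ l.base = .S4) → ∀ ψ : Form, Form.box ψ ∈ s → ψ ∈ s) ∧
  (∀ p ∈ P, Form.pos p ∈ s ∨ Form.npos p ∈ s)

/-- The view S is l-complete. -/
def ViewLComplete (l : Logic) (P : Finset ℕ) (S : View) : Prop :=
  LClosed l P S.parent ∧
  (∀ c ∈ S.children, LClosed l P c) ∧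
  (∀ ψ : Form, Form.dia ψ ∈ S.parent → ∃ c ∈ S.children, ψ ∈ c) ∧
  (∀ ψ : Form, Form.box ψ ∈ S.parent → ∀ c ∈ S.children, ψ ∈ c) ∧
  ((l.base = .K4 ∨ l.base = .KD4 ∨ l.base = .S4) →
    ∀ ψ : Form, Form.box ψ ∈ S.parent → ∀ c ∈ S.children, Form.box ψ ∈ c) ∧
  (l.base = .KD4 → S.children.Nonempty)

/-- The view S is consistent for l: every one of its states is consistent. -/
def ViewConsistent (l : Logic) (S : View) : Prop :=
  Satisfiable l (th S.parent) ∧ ∀ c ∈ S.children, Satisfiable l (th c)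

/-- d = max{md(th(c')) : c' ∈ C(S)}. -/
noncomputable def childDepth (S : View) : ℕ := S.children.sup (fun c => (th c).md)

/-- A K-maximal child-state: a maximally K-consistent subset of s̄ub_d(φ). -/
def KMaxChild (φ : Form) (d : ℕ) (c : Finset Form) : Prop :=
  c ⊆ φ.subBar.filter (fun ψ => ψ.md ≤ d) ∧
  Satisfiable Logic.K (th c) ∧
  ∀ ψ ∈ φ.subf, ψ.md ≤ d → (ψ ∈ c ∨ ψ.neg ∈ c)

/-- S' completes S (for logic l, with respect to φ). -/
def ViewCompletes (l : Logic) (φ : Form) (S' S : View) : Prop :=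
  ViewLComplete l φ.vars S' ∧
  S.parent ⊆ S'.parent ∧
  (∀ a ∈ S.children, ∃ a' ∈ S'.children, a ⊆ a') ∧
  (l.base = .K → ∀ a' ∈ S'.children, KMaxChild φ (childDepth S') a') ∧
  (l.base ≠ .K → ∀ a' ∈ S'.children, MaxState l φ a')

/-- The depth-0 normal form ⋀_{p∈S} p ∧ ⋀_{p∈P∖S} ¬p. -/
noncomputable def nf0 (P S : Finset ℕ) : Form :=
  Form.and (bigAnd (S.image Form.pos)) (bigAnd ((P \ S).image Form.npos))

/-- Fine's normal forms F_P^d. -/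
noncomputable def NF (P : Finset ℕ) : ℕ → Set Form
  | 0 => { χ | ∃ S ⊆ P, χ = nf0 P S }
  | d + 1 => { χ | ∃ S : Finset Form, ↑S ⊆ NF P d ∧ ∃ S0 ⊆ P,
      χ = Form.and (nf0 P S0)
            (Form.and (bigAnd (S.image Form.dia)) (Form.box (bigOr S))) }

/-- φ is complete up to its depth for l. -/
def CompleteUpToDepth (l : Logic) (φ : Form) : Prop :=
  ∀ ψ : Form, ψ.vars ⊆ φ.vars → ψ.md ≤ φ.md →
    (Valid l (φ.imp ψ) ∨ Valid l (φ.imp ψ.neg))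

/-!
Truth of formulas over `P` is invariant under bisimulation modulo `P`, by induction on the
formula. Conversely, equivalence modulo `P` is itself a bisimulation modulo `P`: if a successor
`t` of `s` were equivalent to no successor of `s'`, pick for each successor `t'` of `s'` a formula
true at `t` and false at `t'`; as `M'` is finite there are finitely many, and the diamond of their
conjunction holds at `s` but not at `s'`.
-/

namespace Form

theorem vars_neg (φ : Form) : φ.neg.vars = φ.vars := by
  induction φ <;> simp [neg, vars, *]

end Form

namespace Model

variable (M : Model)

theorem sat_neg (w : M.W) (φ : Form) : M.sat w φ.neg ↔ ¬ M.sat w φ := by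
  induction φ generalizing w with
  | and φ ψ ihφ ihψ =>
    show M.sat w φ.neg ∨ M.sat w ψ.neg ↔ ¬(M.sat w φ ∧ M.sat w ψ)
    rw [ihφ, ihψ, not_and_or]
  | _ => simp [Form.neg, sat, *]

theorem sat_foldr_and (w : M.W) (L : List Form) :
    M.sat w (L.foldr Form.and Form.top) ↔ ∀ ψ ∈ L, M.sat w ψ := by
  induction L with
  | nil => simp [sat]
  | cons ψ L ih => simp [sat, ih]

theorem sat_bigAnd (w : M.W) (s : Finset Form) :
    M.sat w (bigAnd s) ↔ ∀ ψ ∈ s, M.sat w ψ := by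
  simp [bigAnd, sat_foldr_and]

end Model

theorem mem_iff_of_inter_eq {α : Type*} {A B P : Set α} {p : α} (h : A ∩ P = B ∩ P)
    (hp : p ∈ P) : p ∈ A ↔ p ∈ B := by
  simpa [hp] using Set.ext_iff.mp h p

section

variable {P : Set ℕ} {M M' : Model}

theorem vars_foldr_and_subset (L : List Form) (h : ∀ ψ ∈ L, ↑ψ.vars ⊆ P) :
    ↑(L.foldr Form.and Form.top).vars ⊆ P := by
  induction L with
  | nil => simp [Form.vars]
  | cons ψ L ih =>
    simp only [List.mem_cons, forall_eq_or_imp] at h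
    simpa [Form.vars] using ⟨h.1, ih h.2⟩

theorem vars_bigAnd_subset (s : Finset Form) (h : ∀ ψ ∈ s, ↑ψ.vars ⊆ P) :
    ↑(bigAnd s).vars ⊆ P :=
  vars_foldr_and_subset _ fun ψ hψ => h ψ (Finset.mem_toList.mp hψ)

theorem IsBisim.sat_iff {Z : M.W → M'.W → Prop} (hZ : IsBisim P M M' Z) (φ : Form)
    (hφ : ↑φ.vars ⊆ P) {s : M.W} {s' : M'.W} (hs : Z s s') : M.sat s φ ↔ M'.sat s' φ := by
  induction φ generalizing s s' with
  | bot | top => simp [Model.sat]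
  | pos p => exact mem_iff_of_inter_eq (hZ.2 s s' hs).1 (hφ (by simp [Form.vars]))
  | npos p => exact not_congr (mem_iff_of_inter_eq (hZ.2 s s' hs).1 (hφ (by simp [Form.vars])))
  | and φ ψ ihφ ihψ | or φ ψ ihφ ihψ =>
    simp only [Form.vars, Finset.coe_union, Set.union_subset_iff] at hφ
    simp only [Model.sat, ihφ hφ.1 hs, ihψ hφ.2 hs]
  | box φ ih =>
    obtain ⟨-, hforth, hback⟩ := hZ.2 s s' hs
    constructor
    · intro h t' ht'
      obtain ⟨t, ht, hZt⟩ := hback t' ht'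
      exact (ih hφ hZt).mp (h t ht)
    · intro h t ht
      obtain ⟨t', ht', hZt⟩ := hforth t ht
      exact (ih hφ hZt).mpr (h t' ht')
  | dia φ ih =>
    obtain ⟨-, hforth, hback⟩ := hZ.2 s s' hs
    constructor
    · rintro ⟨t, ht, hsat⟩
      obtain ⟨t', ht', hZt⟩ := hforth t ht
      exact ⟨t', ht', (ih hφ hZt).mp hsat⟩
    · rintro ⟨t', ht', hsat⟩
      obtain ⟨t, ht, hZt⟩ := hback t' ht'
      exact ⟨t, ht, (ih hφ hZt).mpr hsat⟩

theorem Bisimilar.equivP {a : M.W} {a' : M'.W} (h : Bisimilar P M a M' a') :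
    EquivP P M a M' a' :=
  let ⟨_, hZ, ha⟩ := h
  fun φ hφ => hZ.sat_iff φ hφ ha

theorem EquivP.symm {a : M.W} {a' : M'.W} (h : EquivP P M a M' a') : EquivP P M' a' M a :=
  fun φ hφ => (h φ hφ).symm

theorem EquivP.inter_eq {a : M.W} {a' : M'.W} (h : EquivP P M a M' a') :
    M.V a ∩ P = M'.V a' ∩ P := by
  ext p
  simp only [Set.mem_inter_iff, and_congr_left_iff]
  exact fun hp => h (.pos p) (by simpa [Form.vars] using hp)

theorem exists_sat_not_sat_of_not_equivP {a : M.W} {a' : M'.W} (h : ¬ EquivP P M a M' a') :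
    ∃ φ : Form, ↑φ.vars ⊆ P ∧ M.sat a φ ∧ ¬ M'.sat a' φ := by
  simp only [EquivP, not_forall] at h
  obtain ⟨φ, hφ, hne⟩ := h
  by_cases ha : M.sat a φ
  · exact ⟨φ, hφ, ha, fun ha' => hne (iff_of_true ha ha')⟩
  · refine ⟨φ.neg, by rwa [Form.vars_neg], (M.sat_neg a φ).mpr ha, ?_⟩
    rw [M'.sat_neg, not_not]
    by_contra ha'
    exact hne (iff_of_false ha ha')

theorem EquivP.exists_rel_equivP {s t : M.W} {s' : M'.W} (h : EquivP P M s M' s')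
    (ht : M.R s t) : ∃ t', M'.R s' t' ∧ EquivP P M t M' t' := by
  by_contra! hnone
  choose χ hχP hχt hχt' using fun t' : {t' // M'.R s' t'} =>
    exists_sat_not_sat_of_not_equivP (hnone t' t'.2)
  have : Finite M'.W := M'.finite
  let Φ := (Set.finite_range χ).toFinset
  have forall_mem_Φ : ∀ {p : Form → Prop}, (∀ u, p (χ u)) → ∀ ψ ∈ Φ, p ψ := by
    simp only [Φ, Set.Finite.mem_toFinset, Set.forall_mem_range, imp_self, implies_true]
  have hvars : ↑(Form.dia (bigAnd Φ)).vars ⊆ P := vars_bigAnd_subset Φ (forall_mem_Φ hχP)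
  obtain ⟨t', ht', hΦt'⟩ := (h _ hvars).mp
    ⟨t, ht, (M.sat_bigAnd t Φ).mpr (forall_mem_Φ hχt)⟩
  exact hχt' ⟨t', ht'⟩ ((M'.sat_bigAnd t' Φ).mp hΦt' _ (by simp [Φ]))

theorem EquivP.isBisim {a : M.W} {a' : M'.W} (h : EquivP P M a M' a') :
    IsBisim P M M' (fun s s' => EquivP P M s M' s') :=
  ⟨⟨a, a', h⟩, fun _ _ hs => ⟨hs.inter_eq, fun _ ht => hs.exists_rel_equivP ht,
    fun _ ht' => (hs.symm.exists_rel_equivP ht').imp fun _ ⟨ht, hst⟩ => ⟨ht, hst.symm⟩⟩⟩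

theorem EquivP.bisimilar {a : M.W} {a' : M'.W} (h : EquivP P M a M' a') :
    Bisimilar P M a M' a' :=
  ⟨_, h.isBisim, h⟩

end

/-- Hennessy–Milner Theorem for finite models. -/
theorem stmt0 (M M' : Model) (a : M.W) (a' : M'.W) (P : Finset ℕ) :
    EquivP ↑P M a M' a' ↔ Bisimilar ↑P M a M' a' :=
  ⟨EquivP.bisimilar, Bisimilar.equivP⟩
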